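/- arXiv:2401.06695 — 2 statements merged into one kernel-verified Lean document; each statement's English description precedes it below -/
import Mathlib

section
/- Let n ≥ 2 and let X : ℝ^n → ℝ^n be a C³ vector field. For each x ∈ ℝ^n let J(x) be the Jacobian matrix with entries J(x)^i_j = ∂X^i/∂x^j, let N(x) = -(1/2)(J(x) - J(x)ᵀ) be the nonlinear connection matrix, for each k let R_k(x) = ∂N/∂x^k be the d-torsion matrices, and let 𝓔(x) be the n×n matrix with entries 𝓔(x)^i_j = -(1/2) Σ_k (∂²X^i/∂x^j∂x^k - ∂²X^k/∂x^i∂x^j) y^k - Σ_k (∂²X^k/∂x^i∂x^j) X^k(x) - Σ_k (∂X^k/∂x^i)(∂X^k/∂x^j) - (1/4) Σ_k (∂X^k/∂x^j - ∂X^j/∂x^k)(∂X^i/∂x^k - ∂X^k/∂x^i) evaluated with the y-dependent part collected into R_k y^k, and define the deviation curvature tensor P(x,y) = Σ_k R_k(x) y^k + 𝓔(x). If n is odd and the matrix 𝓔(x) is skew-symmetric at every point x ∈ ℝ^n, then for every (x,y) ∈ ℝ^n × ℝ^n the determinant of P(x,y) is zero; in particular 0 is an eigenvalue of P(x,y), so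 it is not the case that all (complex) eigenvalues of P(x,y) have strictly negative real part (i.e., the dynamical system dx/dt = X(x) is Jacobi unstable). -/
open Matrix

/-- Partial derivative ∂f/∂xʲ of a scalar function on ℝⁿ. -/
noncomputable def pd {n : ℕ} (f : (Fin n → ℝ) → ℝ) (j : Fin n) (x : Fin n → ℝ) : ℝ :=
  fderiv ℝ f x (Pi.single j 1)

/- STATEMENT 0: if n is odd and the matrix 𝓔 is skew-symmetric at every point, then the
deviation curvature tensor P(x,y) = Σₖ Rₖ(x) yᵏ + 𝓔 has determinant zero everywhere, 0 is
one of its (complex) eigenvalues, and hence it is not the case that all its eigenvalues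
have strictly negative real part: the dynamical system dx/dt = X(x) is Jacobi unstable. -/
theorem jacobi_instability_odd_dimension
    (n : ℕ) (hn : 2 ≤ n) (hodd : Odd n)
    (X : (Fin n → ℝ) → (Fin n → ℝ)) (hX : ContDiff ℝ 3 X)
    (J : (Fin n → ℝ) → Matrix (Fin n) (Fin n) ℝ)
    (hJ : ∀ x i j, J x i j = pd (fun x' => X x' i) j x)
    (N : (Fin n → ℝ) → Matrix (Fin n) (Fin n) ℝ)
    (hN : ∀ x, N x = (-(1 / 2 : ℝ)) • (J x - (J x)ᵀ))
    (R : Fin n → (Fin n → ℝ) → Matrix (Fin n) (Fin n) ℝ)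
    (hR : ∀ k x i j, R k x i j = pd (fun x' => N x' i j) k x)
    (E : (Fin n → ℝ) → (Fin n → ℝ) → Matrix (Fin n) (Fin n) ℝ)
    (hE : ∀ x y i j, E x y i j =
      -(1 / 2 : ℝ) * (∑ k, (pd (pd (fun x' => X x' i) k) j x
          - pd (pd (fun x' => X x' k) j) i x) * y k)
        - (∑ k, pd (pd (fun x' => X x' k) j) i x * X x k)
        - (∑ k, pd (fun x' => X x' k) i x * pd (fun x' => X x' k) j x)
        - (1 / 4 : ℝ) * (∑ k, (pd (fun x' => X x' k) j x - pd (fun x' => X x' j) k x)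
            * (pd (fun x' => X x' i) k x - pd (fun x' => X x' k) i x)))
    (P : (Fin n → ℝ) → (Fin n → ℝ) → Matrix (Fin n) (Fin n) ℝ)
    (hP : ∀ x y, P x y = (∑ k, y k • R k x) + E x y)
    (hEskew : ∀ x y, (E x y)ᵀ = -(E x y)) :
    ∀ x y : Fin n → ℝ,
      (P x y).det = 0 ∧
      (0 : ℂ) ∈ spectrum ℂ ((P x y).map (Complex.ofReal ·)) ∧
      ¬ (∀ μ ∈ spectrum ℂ ((P x y).map (Complex.ofReal ·)), μ.re < 0) := by
  intro x y
  have hNskew : ∀ x' i j, N x' i j = -(N x' j i) := by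
    intro x' i j
    simp only [hN, Matrix.smul_apply, Matrix.sub_apply, Matrix.transpose_apply, smul_eq_mul]
    ring
  have hRskew : ∀ k, (R k x)ᵀ = -(R k x) := by
    intro k
    ext i j
    simp only [Matrix.transpose_apply, Matrix.neg_apply, hR]
    have hfun : (fun x' => N x' j i) = fun x' => -(N x' i j) := by
      funext x'; rw [hNskew x' i j]; ring
    rw [hfun]
    simp [pd, fderiv_neg]
  have hPskew : (P x y)ᵀ = -(P x y) := by
    rw [hP]
    rw [Matrix.transpose_add, hEskew]
    have hs : (∑ k, y k • R k x)ᵀ = -(∑ k, y k • R k x) := by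
      rw [Matrix.transpose_sum]
      simp [Matrix.transpose_smul, hRskew]
    rw [hs]
    abel
  have hdet : (P x y).det = 0 := by
    have h1 : (P x y).det = ((P x y)ᵀ).det := (Matrix.det_transpose _).symm
    rw [hPskew, Matrix.det_neg, Fintype.card_fin, hodd.neg_one_pow] at h1
    linarith
  have hdetC : ((P x y).map (Complex.ofReal ·)).det = 0 := by
    have h2 := RingHom.map_det Complex.ofRealHom (P x y)
    rw [show ((P x y).map (Complex.ofReal ·)) = Complex.ofRealHom.mapMatrix (P x y) from rfl,
      ← h2, hdet]
    simp
  have hnotunit : ¬ IsUnit ((P x y).map (Complex.ofReal ·)) := by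
    rw [Matrix.isUnit_iff_isUnit_det, hdetC]
    exact not_isUnit_zero
  have hspec : (0 : ℂ) ∈ spectrum ℂ ((P x y).map (Complex.ofReal ·)) :=
    spectrum.zero_mem (R := ℂ) hnotunit
  refine ⟨hdet, hspec, fun h => ?_⟩
  have := h 0 hspec
  simp at this
end

section
/- Let n ≥ 1 and let X : ℝ^n → ℝ^n be a C² vector field, and let L(x,y) = Σ_{j=1}^n (y^j - X^j(x))² be the least squares Lagrangian. Then for every (x,y) ∈ ℝ^n × ℝ^n and every i = 1,…,n, the semispray coefficient G^i(x,y) := (1/4)(Σ_j (∂²L/∂x^j∂y^i)(x,y) · y^j - (∂L/∂x^i)(x,y)) satisfies the explicit formula G^i(x,y) = -(1/2)[ Σ_j (∂X^i/∂x^j(x) - ∂X^j/∂x^i(x)) y^j + Σ_j (∂X^j/∂x^i(x)) X^j(x) ]. -/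
/-- Partial derivative in the x-slot of a function of (x, y). -/
noncomputable def pdx {n : ℕ} (f : (Fin n → ℝ) → (Fin n → ℝ) → ℝ) (i : Fin n)
    (x y : Fin n → ℝ) : ℝ :=
  fderiv ℝ (fun x' => f x' y) x (Pi.single i 1)

/-- Partial derivative in the y-slot of a function of (x, y). -/
noncomputable def pdy {n : ℕ} (f : (Fin n → ℝ) → (Fin n → ℝ) → ℝ) (i : Fin n)
    (x y : Fin n → ℝ) : ℝ :=
  fderiv ℝ (f x) y (Pi.single i 1)

/-! Since ∂L/∂yⁱ = 2(yⁱ - Xⁱ), the mixed term is -2 ∂Xⁱ/∂xʲ, while ∂L/∂xⁱ = -2 Σⱼ (yʲ - Xʲ) ∂Xʲ/∂xⁱ;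
substituting both into Gⁱ and collecting the terms in yʲ gives the formula. -/

theorem fderiv_sum_sq_apply {ι E : Type*} [Fintype ι] [NormedAddCommGroup E] [NormedSpace ℝ E]
    {f : ι → E → ℝ} {x : E} (hf : ∀ j, DifferentiableAt ℝ (f j) x) (v : E) :
    fderiv ℝ (fun x => ∑ j, f j x ^ 2) x v = ∑ j, 2 * f j x * fderiv ℝ (f j) x v := by
  rw [fderiv_fun_sum (A := fun j x => f j x ^ 2) fun j _ => (hf j).pow 2, sum_apply]
  refine Finset.sum_congr rfl fun j _ => ?_
  simp [fderiv_fun_pow 2 (hf j)]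

section LeastSquares

variable {n : ℕ} {X : (Fin n → ℝ) → (Fin n → ℝ)} {L : (Fin n → ℝ) → (Fin n → ℝ) → ℝ}

theorem pdy_leastSquares (hL : ∀ x y, L x y = ∑ j, (y j - X x j) ^ 2) (i : Fin n)
    (x y : Fin n → ℝ) : pdy L i x y = 2 * (y i - X x i) := by
  have hLx : L x = fun y => ∑ j, (y j - X x j) ^ 2 := funext (hL x)
  have hproj (j : Fin n) : fderiv ℝ (fun y : Fin n → ℝ => y j) y = ContinuousLinearMap.proj j :=
    (ContinuousLinearMap.proj (R := ℝ) (φ := fun _ : Fin n => ℝ) j).fderiv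
  rw [pdy, hLx, fderiv_sum_sq_apply fun j => by fun_prop]
  simp [fderiv_sub_const, hproj, Pi.single_apply]

theorem pdx_pdy_leastSquares (hL : ∀ x y, L x y = ∑ j, (y j - X x j) ^ 2) {i : Fin n}
    {x : Fin n → ℝ} (hXi : DifferentiableAt ℝ (fun x => X x i) x) (j : Fin n) (y : Fin n → ℝ) :
    pdx (pdy L i) j x y = -2 * pd (fun x' => X x' i) j x := by
  simp only [pdx, pdy_leastSquares hL, fderiv_const_mul (hXi.const_sub (y i)), fderiv_const_sub]
  simp [pd]

theorem pdx_leastSquares (hL : ∀ x y, L x y = ∑ j, (y j - X x j) ^ 2) {x : Fin n → ℝ}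
    (hX : ∀ j, DifferentiableAt ℝ (fun x => X x j) x) (i : Fin n) (y : Fin n → ℝ) :
    pdx L i x y = ∑ j, 2 * (y j - X x j) * -pd (fun x' => X x' j) i x := by
  have hLy : (fun x' => L x' y) = fun x' => ∑ j, (y j - X x' j) ^ 2 := funext fun x' => hL x' y
  rw [pdx, hLy, fderiv_sum_sq_apply fun j => (hX j).const_sub (y j)]
  simp [fderiv_const_sub, pd]

end LeastSquares

theorem semispray_explicit_formula_general
    (n : ℕ)
    (X : (Fin n → ℝ) → (Fin n → ℝ)) (hX : ContDiff ℝ 2 X)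
    (L : (Fin n → ℝ) → (Fin n → ℝ) → ℝ)
    (hL : ∀ x y, L x y = ∑ j, (y j - X x j) ^ 2)
    (G : Fin n → (Fin n → ℝ) → (Fin n → ℝ) → ℝ)
    (hG : ∀ i x y, G i x y =
      (1 / 4 : ℝ) * ((∑ j, pdx (pdy L i) j x y * y j) - pdx L i x y)) :
    ∀ i x y, G i x y =
      -(1 / 2 : ℝ) * ((∑ j, (pd (fun x' => X x' i) j x - pd (fun x' => X x' j) i x) * y j)
        + ∑ j, pd (fun x' => X x' j) i x * X x j) := by
  intro i x y
  have hXc : ∀ j, Differentiable ℝ fun x => X x j :=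
    differentiable_pi.1 (hX.differentiable (by norm_num))
  rw [hG, pdx_leastSquares hL (fun j => (hXc j).differentiableAt)]
  simp only [pdx_pdy_leastSquares hL (hXc i).differentiableAt]
  rw [mul_sub, mul_add, Finset.mul_sum, Finset.mul_sum, Finset.mul_sum, Finset.mul_sum,
    ← Finset.sum_sub_distrib, ← Finset.sum_add_distrib]
  exact Finset.sum_congr rfl fun j _ => by ring

theorem semispray_explicit_formula
    (n : ℕ) (hn : 1 ≤ n)
    (X : (Fin n → ℝ) → (Fin n → ℝ)) (hX : ContDiff ℝ 2 X)
    (L : (Fin n → ℝ) → (Fin n → ℝ) → ℝ)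
    (hL : ∀ x y, L x y = ∑ j, (y j - X x j) ^ 2)
    (G : Fin n → (Fin n → ℝ) → (Fin n → ℝ) → ℝ)
    (hG : ∀ i x y, G i x y =
      (1 / 4 : ℝ) * ((∑ j, pdx (pdy L i) j x y * y j) - pdx L i x y)) :
    ∀ i x y, G i x y =
      -(1 / 2 : ℝ) * ((∑ j, (pd (fun x' => X x' i) j x - pd (fun x' => X x' j) i x) * y j)
        + ∑ j, pd (fun x' => X x' j) i x * X x j) :=
  semispray_explicit_formula_general n X hX L hL G hG
end
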